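/- arXiv:1908.01250 — 5 statements merged into one kernel-verified Lean document; each statement's English description precedes it below -/
import Mathlib

section
/- Let H be a quaternion algebra over a field F of characteristic ≠ 2 and ‡ an orthogonal involution on H. Then SL^‡(2,H) is a group under matrix multiplication: the identity matrix lies in SL^‡(2,H), SL^‡(2,H) is closed under matrix products, and every element (a b; c d) of SL^‡(2,H) has two-sided inverse (d^‡ −b^‡; −c^‡ a^‡), which again lies in SL^‡(2,H). -/
/-! Viewing `‡` as a `star` on `H` and writing `J = (0 1; -1 0)`, the conditions defining
`SL^‡(2,H)` say exactly that `γ J γ^* = J`, where `γ^*` is the `‡`-conjugate transpose: the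
remaining entry of this identity is the `‡` of the determinant condition. Stabilizers of a form are
closed under products, and `γ J γ^* = J` exhibits `J γ^* J⁻¹ = (d^‡ −b^‡; −c^‡ a^‡)` as a right
inverse of `γ`. As `H` is finite-dimensional, `M₂(H)` is Artinian, hence Dedekind-finite, so this
inverse is two-sided, and a left inverse of a stabilizing element stabilizes the form too. -/

/-- `dag : H → H` is an orthogonal involution on the `F`-algebra `H`: an `F`-linear
anti-automorphism of order 2 whose fixed subspace is 3-dimensional. -/
def IsOrthogonalInvolution (F : Type*) {H : Type*} [Field F] [Ring H] [Algebra F H]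
    (dag : H → H) : Prop :=
  (∀ x y : H, dag (x + y) = dag x + dag y) ∧
  (∀ (c : F) (x : H), dag (c • x) = c • dag x) ∧
  (∀ x y : H, dag (x * y) = dag y * dag x) ∧
  (∀ x : H, dag (dag x) = x) ∧
  Module.finrank F (Submodule.span F {x : H | dag x = x}) = 3

/-- `SL^‡(2,H)`: 2×2 matrices `(a b; c d)` over `H` with `a·b^‡ ∈ H^+`, `c·d^‡ ∈ H^+`
and `a·d^‡ − b·c^‡ = 1`, where `H^+` is the fixed set of `‡`. -/
def SLdag {H : Type*} [Ring H] (dag : H → H) : Set (Matrix (Fin 2) (Fin 2) H) :=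
  {γ | dag (γ 0 0 * dag (γ 0 1)) = γ 0 0 * dag (γ 0 1) ∧
       dag (γ 1 0 * dag (γ 1 1)) = γ 1 0 * dag (γ 1 1) ∧
       γ 0 0 * dag (γ 1 1) - γ 0 1 * dag (γ 1 0) = 1}

abbrev IsOrthogonalInvolution.toStarRing {F H : Type*} [Field F] [Ring H] [Algebra F H]
    {dag : H → H} (h : IsOrthogonalInvolution F dag) : StarRing H where
  star := dag
  star_involutive := h.2.2.2.1
  star_mul := h.2.2.1
  star_add := h.1

section FormStabilizer

variable {M : Type*} [Monoid M] [StarMul M]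

def formStabilizer (ω : M) : Submonoid M where
  carrier := {g | g * ω * star g = ω}
  one_mem' := by simp
  mul_mem' := by
    intro g h (hg : g * ω * star g = ω) (hh : h * ω * star h = ω)
    calc g * h * ω * star (g * h) = g * (h * ω * star h) * star g := by
          simp only [star_mul, mul_assoc]
      _ = ω := by rw [hh, hg]

lemma mem_formStabilizer_iff {ω g : M} : g ∈ formStabilizer ω ↔ g * ω * star g = ω := Iff.rfl

lemma mul_eq_one_of_mem_formStabilizer {ω ω' g : M} (hg : g ∈ formStabilizer ω)
    (hω : ω * ω' = 1) : g * (ω * star g * ω') = 1 := by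
  rw [← mul_assoc, ← mul_assoc, hg, hω]

lemma mem_formStabilizer_of_mul_eq_one {ω g h : M} (hg : g ∈ formStabilizer ω)
    (hhg : h * g = 1) : h ∈ formStabilizer ω :=
  calc h * ω * star h = h * (g * ω * star g) * star h := by rw [hg]
    _ = h * g * ω * star (h * g) := by simp only [star_mul, mul_assoc]
    _ = ω := by rw [hhg, one_mul, star_one, mul_one]

end FormStabilizer

section SymplecticForm

variable {R : Type*} [Ring R]

variable (R) in
def symplecticForm₂ : Matrix (Fin 2) (Fin 2) R := !![0, 1; -1, 0]

lemma symplecticForm₂_mul_neg_self : symplecticForm₂ R * -symplecticForm₂ R = 1 := by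
  simp [symplecticForm₂, Matrix.one_fin_two]

variable [StarRing R]

lemma symplecticForm₂_mul_star_mul_neg (γ : Matrix (Fin 2) (Fin 2) R) :
    symplecticForm₂ R * star γ * -symplecticForm₂ R =
      !![star (γ 1 1), -star (γ 0 1); -star (γ 1 0), star (γ 0 0)] := by
  ext i j
  fin_cases i <;> fin_cases j <;>
    simp [symplecticForm₂, Matrix.star_eq_conjTranspose, Matrix.mul_apply, Matrix.vecMul,
      dotProduct, Fin.sum_univ_two]

lemma mul_symplecticForm₂_mul_star (a b c d : R) :
    !![a, b; c, d] * symplecticForm₂ R * star !![a, b; c, d] =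
      !![a * star b - b * star a, a * star d - b * star c;
        c * star b - d * star a, c * star d - d * star c] := by
  ext i j
  fin_cases i <;> fin_cases j <;>
    simp [symplecticForm₂, Matrix.star_eq_conjTranspose, Matrix.mul_apply, Fin.sum_univ_two,
      sub_eq_neg_add]

lemma SLdag_star_eq : SLdag (star : R → R) = formStabilizer (symplecticForm₂ R) := by
  ext γ
  rw [SetLike.mem_coe, mem_formStabilizer_iff, γ.eta_fin_two, mul_symplecticForm₂_mul_star,
    symplecticForm₂, ← Matrix.ext_iff]
  simp only [SLdag, Set.mem_ofPred_eq, star_mul, star_star, Fin.forall_fin_two, Matrix.of_apply,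
    Matrix.cons_val', Matrix.cons_val_fin_one, Matrix.cons_val_zero, Matrix.cons_val_one]
  constructor
  · rintro ⟨h01, h10, hdet⟩
    have hdet' : γ 1 1 * star (γ 0 0) - γ 1 0 * star (γ 0 1) = 1 := by
      simpa only [star_sub, star_mul, star_star, star_one] using congrArg star hdet
    refine ⟨⟨by rw [h01, sub_self], hdet⟩, by rw [← hdet']; abel, by rw [h10, sub_self]⟩
  · rintro ⟨⟨h01, hdet⟩, -, h10⟩
    exact ⟨(sub_eq_zero.mp h01).symm, (sub_eq_zero.mp h10).symm, hdet⟩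

end SymplecticForm

theorem stmt_0_general (F H : Type*) [Field F] [Ring H] [Algebra F H]
    (hdim : Module.finrank F H = 4)
    (dag : H → H) (hdag : IsOrthogonalInvolution F dag) :
    (1 : Matrix (Fin 2) (Fin 2) H) ∈ SLdag dag ∧
    (∀ γ δ, γ ∈ SLdag dag → δ ∈ SLdag dag → γ * δ ∈ SLdag dag) ∧
    (∀ γ ∈ SLdag dag,
      !![dag (γ 1 1), -dag (γ 0 1); -dag (γ 1 0), dag (γ 0 0)] ∈ SLdag dag ∧
      γ * !![dag (γ 1 1), -dag (γ 0 1); -dag (γ 1 0), dag (γ 0 0)] = 1 ∧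
      !![dag (γ 1 1), -dag (γ 0 1); -dag (γ 1 0), dag (γ 0 0)] * γ = 1) := by
  let _ := hdag.toStarRing
  have : FiniteDimensional F H := .of_finrank_pos (by omega)
  have : IsArtinianRing H := IsArtinianRing.of_finite F H
  have hS : SLdag dag = formStabilizer (symplecticForm₂ H) := SLdag_star_eq
  rw [hS]
  refine ⟨one_mem _, fun γ δ => mul_mem, fun γ hγ => ?_⟩
  have hright := mul_eq_one_of_mem_formStabilizer hγ symplecticForm₂_mul_neg_self
  rw [symplecticForm₂_mul_star_mul_neg] at hright
  have hleft := mul_eq_one_comm.mp hright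
  exact ⟨mem_formStabilizer_of_mul_eq_one hγ hleft, hright, hleft⟩

/-- for a quaternion algebra `H` over a field `F` of characteristic ≠ 2 with
orthogonal involution `‡`, the set `SL^‡(2,H)` is a group under matrix multiplication:
it contains the identity, is closed under products, and each `(a b; c d)` in it has the
two-sided inverse `(d^‡ −b^‡; −c^‡ a^‡)`, which again lies in `SL^‡(2,H)`. -/
theorem stmt_0 (F H : Type*) [Field F] [Ring H] [Algebra F H]
    (hchar : (2 : F) ≠ 0)
    [Algebra.IsCentral F H] [IsSimpleRing H] (hdim : Module.finrank F H = 4)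
    (dag : H → H) (hdag : IsOrthogonalInvolution F dag) :
    (1 : Matrix (Fin 2) (Fin 2) H) ∈ SLdag dag ∧
    (∀ γ δ, γ ∈ SLdag dag → δ ∈ SLdag dag → γ * δ ∈ SLdag dag) ∧
    (∀ γ ∈ SLdag dag,
      !![dag (γ 1 1), -dag (γ 0 1); -dag (γ 1 0), dag (γ 0 0)] ∈ SLdag dag ∧
      γ * !![dag (γ 1 1), -dag (γ 0 1); -dag (γ 1 0), dag (γ 0 0)] = 1 ∧
      !![dag (γ 1 1), -dag (γ 0 1); -dag (γ 1 0), dag (γ 0 0)] * γ = 1) :=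
  stmt_0_general F H hdim dag hdag
end

section
/- Let F be a field of characteristic ≠ 2, a, b ∈ F nonzero, H = (a,b/F) the quaternion algebra with basis 1, i, j, ij, and ‡ the orthogonal involution (w + xi + yj + zij)^‡ = w + xi + yj − zij, so H^+ = F ⊕ Fi ⊕ Fj. Set J = (0 ij; −ij 0) ∈ Mat(2,H). Then SL^‡(2,H) = { γ ∈ GL(2,H) : γ · J · γ̄^T = J }, where γ̄^T denotes the transpose of γ with the standard involution x ↦ x̄ applied to each entry. -/
/-! With `k = ij` one has `k x̄ = x^‡ k`, so the `(p, q)` entry of `γ J γ̄ᵀ` is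
`(γ_{p0} γ_{q1}^‡ − γ_{p1} γ_{q0}^‡) k`. Cancelling the unit `k`, `γ J γ̄ᵀ = J` says that this
`‡`-Gram matrix is `(0 1; −1 0)`. Its diagonal entries have the form `x − x^‡` and its `(1, 0)`
entry is minus the `‡` of its `(0, 1)` entry, so these four equations are exactly the three
conditions defining `SL^‡(2,H)`. Invertibility is automatic: `γ` has the right inverse
`J γ̄ᵀ J⁻¹`, and `Mat(2,H)` is finite-dimensional over `F`, hence Dedekind-finite. -/

open Quaternion Matrix

theorem isUnit_of_mul_mul_eq_self {M : Type*} [Monoid M] [IsDedekindFiniteMonoid M] {g u d : M}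
    (hu : IsUnit u) (h : g * u * d = u) : IsUnit g :=
  IsUnit.of_mul_eq_one (u * d * ↑hu.unit⁻¹) <| by
    rw [← mul_assoc, ← mul_assoc, h, IsUnit.mul_val_inv]

namespace QuaternionAlgebra

variable {F : Type*} [Field F] {a b : F}

def dagger (q : ℍ[F, a, b]) : ℍ[F, a, b] := ⟨q.re, q.imI, q.imJ, -q.imK⟩

def ij : ℍ[F, a, b] := ⟨0, 0, 0, 1⟩

theorem dagger_one : dagger (1 : ℍ[F, a, b]) = 1 := by
  ext <;> simp [dagger]

theorem dagger_sub (x y : ℍ[F, a, b]) : dagger (x - y) = dagger x - dagger y := by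
  ext <;> simp [dagger, neg_add_eq_sub]

theorem dagger_mul_dagger (x y : ℍ[F, a, b]) : dagger (x * dagger y) = y * dagger x := by
  ext <;> simp [dagger] <;> ring

theorem ij_mul_star (x : ℍ[F, a, b]) : ij * star x = dagger x * ij := by
  ext <;> simp [ij, dagger]

theorem isUnit_ij (ha : a ≠ 0) (hb : b ≠ 0) : IsUnit (ij : ℍ[F, a, b]) :=
  isUnit_iff_exists.2 ⟨(-(a * b))⁻¹ • ij, by ext <;> simp [ij]; field_simp,
    by ext <;> simp [ij]; field_simp⟩

def skewIJ : Matrix (Fin 2) (Fin 2) ℍ[F, a, b] := !![0, ij; -ij, 0]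

def daggerGram (γ : Matrix (Fin 2) (Fin 2) ℍ[F, a, b]) : Matrix (Fin 2) (Fin 2) ℍ[F, a, b] :=
  of fun p q => γ p 0 * dagger (γ q 1) - γ p 1 * dagger (γ q 0)

theorem skewIJ_eq : (skewIJ : Matrix (Fin 2) (Fin 2) ℍ[F, a, b]) =
    !![0, 1; -1, 0] * scalar (Fin 2) ij := by
  refine Matrix.ext fun p q => ?_
  fin_cases p <;> fin_cases q <;> simp [skewIJ, scalar_apply]

theorem mul_skewIJ_mul_conjTranspose (γ : Matrix (Fin 2) (Fin 2) ℍ[F, a, b]) :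
    γ * skewIJ * γᴴ = daggerGram γ * scalar (Fin 2) ij := by
  refine Matrix.ext fun p q => ?_
  rw [scalar_apply, mul_diagonal]
  simp [skewIJ, daggerGram, mul_apply, Fin.sum_univ_two, sub_mul, mul_assoc, ij_mul_star,
    neg_add_eq_sub]

theorem daggerGram_swap (γ : Matrix (Fin 2) (Fin 2) ℍ[F, a, b]) (p q : Fin 2) :
    daggerGram γ q p = -dagger (daggerGram γ p q) := by
  simp [daggerGram, dagger_sub, dagger_mul_dagger]

theorem daggerGram_eq_iff (γ : Matrix (Fin 2) (Fin 2) ℍ[F, a, b]) :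
    daggerGram γ = !![0, 1; -1, 0] ↔ γ ∈ SLdag dagger := by
  have hdiag (p : Fin 2) :
      daggerGram γ p p = γ p 0 * dagger (γ p 1) - dagger (γ p 0 * dagger (γ p 1)) := by
    simp [daggerGram, dagger_mul_dagger]
  rw [← Matrix.ext_iff]
  simp only [Fin.forall_fin_two, daggerGram_swap γ 0 1, hdiag, of_apply, cons_val', cons_val_zero,
    cons_val_one, empty_val', cons_val_fin_one, sub_eq_zero, neg_inj]
  constructor
  · rintro ⟨⟨h00, h01⟩, -, h11⟩
    exact ⟨h00.symm, h11.symm, h01⟩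
  · rintro ⟨h00, h11, h01⟩
    exact ⟨⟨h00.symm, h01⟩, by rw [show daggerGram γ 0 1 = 1 from h01, dagger_one], h11.symm⟩

theorem isUnit_skewIJ (ha : a ≠ 0) (hb : b ≠ 0) :
    IsUnit (skewIJ : Matrix (Fin 2) (Fin 2) ℍ[F, a, b]) := by
  rw [skewIJ_eq]
  refine .mul (isUnit_iff_exists.2 ⟨!![0, -1; 1, 0], ?_, ?_⟩) ((isUnit_ij ha hb).map _) <;>
    simp [one_fin_two]

theorem mul_skewIJ_mul_conjTranspose_eq_iff (ha : a ≠ 0) (hb : b ≠ 0)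
    (γ : Matrix (Fin 2) (Fin 2) ℍ[F, a, b]) : γ * skewIJ * γᴴ = skewIJ ↔ γ ∈ SLdag dagger := by
  rw [mul_skewIJ_mul_conjTranspose, skewIJ_eq,
    ((isUnit_ij ha hb).map (scalar (Fin 2))).mul_left_inj, daggerGram_eq_iff]

end QuaternionAlgebra

theorem stmt_1_general (F : Type*) [Field F] (a b : F) (ha : a ≠ 0) (hb : b ≠ 0) :
    SLdag (fun q : ℍ[F, a, b] => ⟨q.re, q.imI, q.imJ, -q.imK⟩) =
      {γ : Matrix (Fin 2) (Fin 2) ℍ[F, a, b] | IsUnit γ ∧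
        γ * !![(0 : ℍ[F, a, b]), ⟨0, 0, 0, 1⟩; -⟨0, 0, 0, 1⟩, 0] * γᴴ =
          !![(0 : ℍ[F, a, b]), ⟨0, 0, 0, 1⟩; -⟨0, 0, 0, 1⟩, 0]} := by
  have : IsArtinianRing (Matrix (Fin 2) (Fin 2) ℍ[F, a, b]) := .of_finite F _
  ext γ
  change γ ∈ SLdag QuaternionAlgebra.dagger ↔
    IsUnit γ ∧ γ * QuaternionAlgebra.skewIJ * γᴴ = QuaternionAlgebra.skewIJ
  rw [← QuaternionAlgebra.mul_skewIJ_mul_conjTranspose_eq_iff ha hb]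
  exact ⟨fun h => ⟨isUnit_of_mul_mul_eq_self (QuaternionAlgebra.isUnit_skewIJ ha hb) h, h⟩,
    And.right⟩

/-- for the quaternion algebra `H = (a,b/F)` (char F ≠ 2, a,b ≠ 0) with the
orthogonal involution `(w + xi + yj + zij)^‡ = w + xi + yj − zij` and
`J = (0 ij; −ij 0)`, one has `SL^‡(2,H) = {γ ∈ GL(2,H) : γ·J·γ̄ᵀ = J}`, where `γ̄ᵀ` is the
conjugate-transpose with respect to the standard involution. -/
theorem stmt_1 (F : Type*) [Field F] (hchar : (2 : F) ≠ 0) (a b : F) (ha : a ≠ 0) (hb : b ≠ 0) :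
    SLdag (fun q : ℍ[F, a, b] => ⟨q.re, q.imI, q.imJ, -q.imK⟩) =
      {γ : Matrix (Fin 2) (Fin 2) ℍ[F, a, b] | IsUnit γ ∧
        γ * !![(0 : ℍ[F, a, b]), ⟨0, 0, 0, 1⟩; -⟨0, 0, 0, 1⟩, 0] * γᴴ =
          !![(0 : ℍ[F, a, b]), ⟨0, 0, 0, 1⟩; -⟨0, 0, 0, 1⟩, 0]} :=
  stmt_1_general F a b ha hb
end

section
/- Let H be a quaternion algebra over a field F of characteristic ≠ 2 with orthogonal involution ‡ and fixed subspace H^+. Then every unit u ∈ H^× can be written in the form u = 1 + x·y for some x, y ∈ H^+. -/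
open Module
open scoped Quaternion

theorem IsSimpleRing.exists_mul_mul_ne_zero {R : Type*} [Ring R] [IsSimpleRing R] {a : R}
    (ha : a ≠ 0) : ∃ g, a * g * a ≠ 0 := by
  by_contra! h
  let I : TwoSidedIdeal R := TwoSidedIdeal.mk' {x | ∀ g, a * g * x = 0}
    (fun g => by simp) (fun hx hy g => by simp [mul_add, hx g, hy g])
    (fun hx g => by simp [hx g]) (fun {x y} hy g => by simpa [mul_assoc] using hy (g * x))
    (fun {x y} hx g => by simp [← mul_assoc, hx g])
  have h1 : (1 : R) ∈ I := IsSimpleRing.one_mem_of_ne_zero_mem I ha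
    ((TwoSidedIdeal.mem_mk' _ _ _ _ _ _ a).2 h)
  exact ha (by simpa using (TwoSidedIdeal.mem_mk' _ _ _ _ _ _ 1).1 h1 1)

theorem Submodule.exists_eq_span_singleton_of_finrank_eq_one {K V : Type*} [DivisionRing K]
    [AddCommGroup V] [Module K V] {p : Submodule K V} (hp : finrank K p = 1) :
    ∃ v ≠ 0, p = K ∙ v := by
  obtain ⟨⟨v, hv⟩, hv0, hspan⟩ := finrank_eq_one_iff'.1 hp
  refine ⟨v, by simpa using hv0,
    le_antisymm (fun w hw => ?_) ((span_singleton_le_iff_mem _ _).2 hv)⟩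
  obtain ⟨c, hc⟩ := hspan ⟨w, hw⟩
  exact mem_span_singleton.2 ⟨c, congrArg Subtype.val hc⟩

theorem isUnit_of_mul_self_eq_smul_one {F A : Type*} [Field F] [Ring A] [Algebra F A] {a : A}
    {α : F} (ha : a * a = α • 1) (hα : α ≠ 0) : IsUnit a :=
  ⟨⟨a, α⁻¹ • a, by rw [mul_smul_comm, ha, smul_smul, inv_mul_cancel₀ hα, one_smul],
    by rw [smul_mul_assoc, ha, smul_smul, inv_mul_cancel₀ hα, one_smul]⟩, rfl⟩

namespace QuaternionAlgebra

variable {F A : Type*} [Field F] [Ring A] [Algebra F A] {α β : F}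

theorem isSimpleRing (h2 : (2 : F) ≠ 0) (hα : α ≠ 0) (hβ : β ≠ 0) :
    IsSimpleRing ℍ[F,α,β] := by
  rw [IsSimpleRing.iff_injective_ringHom]
  intro S _ _ f
  set I : ℍ[F,α,β] := ⟨0, 1, 0, 0⟩
  set J : ℍ[F,α,β] := ⟨0, 0, 1, 0⟩
  set K : ℍ[F,α,β] := ⟨0, 0, 0, 1⟩
  -- averaging `y` over conjugation by the units `1, i, j, k` leaves `4 * y.re`
  have re_eq_zero : ∀ y, f y = 0 → y.re = 0 := by
    intro y hy
    have havg : ((4 * y.re : F) : ℍ[F,α,β]) =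
        y + α⁻¹ * (I * y * I) + β⁻¹ * (J * y * J) + (-(α * β)⁻¹) * (K * y * K) := by
      ext <;>
        simp only [I, J, K, coe_mul, coe_ofNat, mul_inv_rev, re_add, imI_add, imJ_add, imK_add,
          re_neg, imI_neg, imJ_neg, imK_neg, re_mul, imI_mul, imJ_mul, imK_mul, re_coe, imI_coe,
          imJ_coe, imK_coe, re_ofNat, imI_ofNat, imJ_ofNat, imK_ofNat, mul_zero, zero_mul,
          mul_one, one_mul, add_zero, zero_add, sub_zero, zero_sub, sub_self, neg_mul, mul_neg,
          neg_zero, neg_neg, sub_neg_eq_add] <;>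
        field_simp <;> ring
    have hf : f ((4 * y.re : F) : ℍ[F,α,β]) = 0 := by
      simp only [havg, map_add, map_mul, hy, mul_zero, zero_mul, add_zero]
    by_contra hre
    have hone : (1 : ℍ[F,α,β]) = ((4 * y.re)⁻¹ : F) * ((4 * y.re : F) : ℍ[F,α,β]) := by
      rw [← coe_mul, inv_mul_cancel₀ (by simp [hre, h2, show (4 : F) = 2 * 2 by norm_num]),
        coe_one]
    exact one_ne_zero (by rw [← map_one f, hone, map_mul, hf, mul_zero] : (1 : S) = 0)
  rw [injective_iff_map_eq_zero]
  intro x hx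
  have hxre := re_eq_zero x hx
  have hxI := re_eq_zero (x * I) (by simp [hx])
  have hxJ := re_eq_zero (x * J) (by simp [hx])
  have hxK := re_eq_zero (x * K) (by simp [hx])
  simp only [I, J, K, re_mul, mul_zero, mul_one, zero_add, add_zero, zero_mul, sub_zero,
    mul_eq_zero, zero_sub, neg_eq_zero] at hxI hxJ hxK
  ext <;> simp_all

theorem exists_star_mul_imI_eq_zero (h2 : (2 : F) ≠ 0) (hα : α ≠ 0) (hβ : β ≠ 0)
    {x : ℍ[F,α,β]} (hx : x.imI ≠ 0) :
    ∃ w : ℍ[F,α,β], w.imI = 0 ∧ (star w * x).imI = 0 ∧ (w * star w).re ≠ 0 := by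
  set Q : F → F → F := fun b c ↦
    β * (b * x.imK - c * x.imJ) ^ 2 - x.imI ^ 2 * b ^ 2 + α * x.imI ^ 2 * c ^ 2
  -- a binary quadratic form vanishing at `(1, 0)`, `(0, 1)` and `(1, 1)` is zero when `2 ≠ 0`
  obtain ⟨b, c, hbc⟩ : ∃ b c, Q b c ≠ 0 := by
    by_contra! h
    have h10 := h 1 0
    have h01 := h 0 1
    have h11 := h 1 1
    simp only [Q] at h10 h01 h11
    have h23 : x.imJ * x.imK = 0 := by
      have : (2 * β) * (x.imJ * x.imK) = 0 := by linear_combination h10 + h01 - h11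
      simpa [h2, hβ] using this
    rcases mul_eq_zero.1 h23 with hJ | hK
    · have : α * x.imI ^ 2 = 0 := by linear_combination h01 - β * x.imJ * hJ
      simp_all
    · have : x.imI ^ 2 = 0 := by linear_combination β * x.imK * hK - h10
      simp_all
  set w : ℍ[F,α,β] := ⟨-(β * (b * x.imK - c * x.imJ)) / x.imI, 0, b, c⟩
  have hN : (w * star w).re = β * Q b c / x.imI ^ 2 := by
    simp only [w, Q, star_mk, mk_mul_mk, mul_zero, zero_mul, add_zero, zero_add, neg_zero,
      mul_neg, sub_neg_eq_add, sub_zero]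
    field_simp
    ring
  refine ⟨w, rfl, ?_, by simp [hN, hβ, hbc, hx]⟩
  simp only [w, star_mk, imI_mul, mul_zero, zero_mul, add_zero, neg_zero, mul_neg, neg_mul,
    sub_neg_eq_add]
  field_simp
  ring

theorem Basis.lift_surjective [Nontrivial A] (q : Basis A α 0 β) (h2 : (2 : F) ≠ 0)
    (hα : α ≠ 0) (hβ : β ≠ 0) (hA : finrank F A = 4) : Function.Surjective q.lift := by
  have := isSimpleRing h2 hα hβ
  have : FiniteDimensional F A := .of_finrank_pos (by omega)
  exact (LinearMap.injective_iff_surjective_of_finrank_eq_finrank (f := q.liftHom.toLinearMap)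
    (by rw [hA, finrank_eq_four])).1 q.liftHom.toRingHom.injective

namespace Basis

variable [StarRing F] [TrivialStar F] [StarRing A] [StarModule F A]

theorem isSelfAdjoint_lift (q : Basis A α 0 β) (hi : star q.i = -q.i) (hj : IsSelfAdjoint q.j)
    {x : ℍ[F,α,β]} (hx : x.imI = 0) : IsSelfAdjoint (q.lift x) := by
  have hk : IsSelfAdjoint q.k := by
    rw [IsSelfAdjoint, ← q.i_mul_j, star_mul, hi, hj.star_eq, mul_neg, q.j_mul_i, q.i_mul_j,
      zero_smul, zero_sub, neg_neg]
  simp only [lift, hx, zero_smul, add_zero, Algebra.algebraMap_eq_smul_one]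
  exact ((IsSelfAdjoint.all _).smul (.one A) |>.add ((IsSelfAdjoint.all _).smul hj)).add
    ((IsSelfAdjoint.all _).smul hk)

theorem exists_isSelfAdjoint_mul_eq_lift (q : Basis A α 0 β) (hi : star q.i = -q.i)
    (hj : IsSelfAdjoint q.j) (h2 : (2 : F) ≠ 0) (hα : α ≠ 0) (hβ : β ≠ 0) (x : ℍ[F,α,β]) :
    ∃ y z : A, IsSelfAdjoint y ∧ IsSelfAdjoint z ∧ y * z = q.lift x := by
  by_cases hx : x.imI = 0
  · exact ⟨1, q.lift x, .one A, q.isSelfAdjoint_lift hi hj hx, one_mul _⟩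
  obtain ⟨w, hw, hwx, hN⟩ := exists_star_mul_imI_eq_zero h2 hα hβ hx
  refine ⟨q.lift w, (w * star w).re⁻¹ • q.lift (star w * x), q.isSelfAdjoint_lift hi hj hw,
    (IsSelfAdjoint.all _).smul (q.isSelfAdjoint_lift hi hj hwx), ?_⟩
  rw [mul_smul_comm, ← q.lift_mul, ← mul_assoc, mul_star_eq_coe w, re_coe, coe_mul_eq_smul,
    q.lift_smul, smul_smul, inv_mul_cancel₀ hN, one_smul]

end Basis

end QuaternionAlgebra

section StarAlgebra

variable {F H : Type*} [Field F] [StarRing F] [TrivialStar F] [Ring H] [StarRing H]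
  [Algebra F H] [StarModule F H]

theorem finrank_selfAdjoint_add_finrank_skewAdjoint [FiniteDimensional F H]
    (h2 : (2 : F) ≠ 0) :
    finrank F (selfAdjoint.submodule F H) + finrank F (skewAdjoint.submodule F H) =
      finrank F H := by
  let := invertibleOfNonzero h2
  have : Module.Finite F (selfAdjoint H) :=
    inferInstanceAs (Module.Finite F (selfAdjoint.submodule F H))
  have : Module.Finite F (skewAdjoint H) :=
    inferInstanceAs (Module.Finite F (skewAdjoint.submodule F H))
  rw [(StarModule.decomposeProdAdjoint F H).finrank_eq, finrank_prod]
  rfl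

section SkewGenerator

variable {s : H}

theorem star_eq_neg_of_skewAdjoint_eq_span (hs : skewAdjoint.submodule F H = F ∙ s) :
    star s = -s :=
  skewAdjoint.mem_iff.1
    (hs ▸ Submodule.mem_span_singleton_self s : s ∈ skewAdjoint.submodule F H)

theorem exists_mul_add_mul_eq_smul (hs : skewAdjoint.submodule F H = F ∙ s) {y : H}
    (hy : IsSelfAdjoint y) : ∃ c : F, s * y + y * s = c • s := by
  have hs' := star_eq_neg_of_skewAdjoint_eq_span hs
  have hmem : s * y + y * s ∈ skewAdjoint.submodule F H := by
    show star _ = -_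
    rw [star_add, star_mul, star_mul, hs', hy.star_eq, mul_neg, neg_mul, neg_add, add_comm]
  rw [hs] at hmem
  obtain ⟨c, hc⟩ := Submodule.mem_span_singleton.1 hmem
  exact ⟨c, hc.symm⟩

theorem exists_isSelfAdjoint_add_smul (hs : skewAdjoint.submodule F H = F ∙ s)
    (h2 : (2 : F) ≠ 0) (g : H) : ∃ (y : H) (c : F), IsSelfAdjoint y ∧ g = y + c • s := by
  let := invertibleOfNonzero h2
  obtain ⟨c, hc⟩ := Submodule.mem_span_singleton.1 (hs ▸ (skewAdjointPart F g).2 :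
    (skewAdjointPart F g : H) ∈ F ∙ s)
  exact ⟨selfAdjointPart F g, c, (selfAdjointPart F g).2,
    by rw [hc, StarModule.selfAdjointPart_add_skewAdjointPart]⟩

theorem exists_mul_self_eq_smul_one [Algebra.IsCentral F H]
    (hs : skewAdjoint.submodule F H = F ∙ s) (h2 : (2 : F) ≠ 0) : ∃ α : F, s * s = α • 1 := by
  have hcomm : ∀ g, g * (s * s) = s * s * g := by
    intro g
    obtain ⟨y, c, hy, rfl⟩ := exists_isSelfAdjoint_add_smul hs h2 g
    obtain ⟨d, hd⟩ := exists_mul_add_mul_eq_smul hs hy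
    have hsy : s * s * y = y * (s * s) := by
      have h : s * (s * y + y * s) = (s * y + y * s) * s := by
        rw [hd, mul_smul_comm, smul_mul_assoc]
      simp only [mul_add, add_mul, mul_assoc] at h
      rw [mul_assoc]
      exact add_right_cancel (h.trans (add_comm _ _))
    simp only [add_mul, mul_add, hsy, smul_mul_assoc, mul_smul_comm, mul_assoc]
  obtain ⟨α, hα⟩ :=
    Algebra.mem_bot.1 (Algebra.IsCentral.out ((Subalgebra.mem_center_iff (R := F)).2 hcomm))
  exact ⟨α, by rw [← hα, Algebra.algebraMap_eq_smul_one]⟩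

theorem mul_self_ne_zero_of_skewAdjoint_eq_span [IsSimpleRing H]
    (hs : skewAdjoint.submodule F H = F ∙ s) (h2 : (2 : F) ≠ 0) (hs0 : s ≠ 0) : s * s ≠ 0 := by
  intro hss
  obtain ⟨g, hg⟩ := IsSimpleRing.exists_mul_mul_ne_zero hs0
  obtain ⟨y, c, hy, rfl⟩ := exists_isSelfAdjoint_add_smul hs h2 g
  obtain ⟨d, hd⟩ := exists_mul_add_mul_eq_smul hs hy
  have hsys : s * y * s = 0 := by
    rw [eq_sub_of_add_eq hd, sub_mul, smul_mul_assoc, hss, mul_assoc, hss, smul_zero, mul_zero,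
      sub_zero]
  apply hg
  simp only [mul_add, add_mul, hsys, mul_smul_comm, hss, zero_mul, smul_zero, zero_add]

theorem exists_eq_smul_one_of_commute {α : F} (hs : skewAdjoint.submodule F H = F ∙ s)
    (hss : s * s = α • 1) (hα : α ≠ 0) (h2 : (2 : F) ≠ 0) {x : H} (hx : IsSelfAdjoint x)
    (hsx : Commute s x) : ∃ k : F, x = k • 1 := by
  obtain ⟨c, hc⟩ := exists_mul_add_mul_eq_smul hs hx
  have h : s * ((2 : F) • x - c • 1) = 0 := by
    rw [mul_sub, mul_smul_comm, mul_smul_comm, mul_one, two_smul]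
    nth_rw 2 [hsx.eq]
    rw [hc, sub_self]
  have h' := sub_eq_zero.1 ((isUnit_of_mul_self_eq_smul_one hss hα).mul_right_eq_zero.1 h)
  refine ⟨c / 2, ?_⟩
  rw [div_eq_inv_mul, mul_smul, ← h', smul_smul, inv_mul_cancel₀ h2, one_smul]

theorem exists_eq_smul_one_add_anticomm (hs : skewAdjoint.submodule F H = F ∙ s)
    (h2 : (2 : F) ≠ 0) {y : H} (hy : IsSelfAdjoint y) :
    ∃ (k : F) (w : H), IsSelfAdjoint w ∧ w * s = -(s * w) ∧ y = k • 1 + w := by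
  obtain ⟨c, hc⟩ := exists_mul_add_mul_eq_smul hs hy
  refine ⟨c / 2, y - (c / 2) • 1, hy.sub ((IsSelfAdjoint.all _).smul (.one H)), ?_, by abel⟩
  rw [sub_mul, mul_sub, smul_mul_assoc, mul_smul_comm, one_mul, mul_one, eq_sub_of_add_eq' hc]
  match_scalars
  · field_simp
    ring
  · ring

theorem exists_mul_self_eq_smul_one_of_anticomm {α : F}
    (hs : skewAdjoint.submodule F H = F ∙ s) (hss : s * s = α • 1) (hα : α ≠ 0)
    (h2 : (2 : F) ≠ 0) {w : H} (hw : IsSelfAdjoint w) (hws : w * s = -(s * w)) :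
    ∃ β : F, w * w = β • 1 := by
  refine exists_eq_smul_one_of_commute hs hss hα h2 (by simp [IsSelfAdjoint, hw.star_eq]) ?_
  calc s * (w * w) = -(w * s) * w := by rw [hws, neg_neg, mul_assoc]
    _ = w * w * s := by rw [neg_mul, mul_assoc, ← mul_neg, ← hws, mul_assoc]

theorem exists_anticomm_ne_zero [FiniteDimensional F H] (hs : skewAdjoint.submodule F H = F ∙ s)
    (h2 : (2 : F) ≠ 0) (hrank : 1 < finrank F (selfAdjoint.submodule F H)) :
    ∃ w : H, IsSelfAdjoint w ∧ w * s = -(s * w) ∧ w ≠ 0 := by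
  by_contra! h
  have hle : selfAdjoint.submodule F H ≤ F ∙ (1 : H) := by
    intro y hy
    obtain ⟨k, w, hw, hws, rfl⟩ := exists_eq_smul_one_add_anticomm hs h2 hy
    rw [h w hw hws, add_zero]
    exact Submodule.smul_mem _ _ (Submodule.mem_span_singleton_self 1)
  have h1 : finrank F (F ∙ (1 : H)) ≤ 1 := by simpa using finrank_span_le_card ({1} : Set H)
  have := Submodule.finrank_mono hle
  omega

theorem exists_anticomm_mul_self_eq_smul_one [IsSimpleRing H] [FiniteDimensional F H] {α : F}
    (hs : skewAdjoint.submodule F H = F ∙ s) (hss : s * s = α • 1) (hα : α ≠ 0)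
    (h2 : (2 : F) ≠ 0) (hrank : 1 < finrank F (selfAdjoint.submodule F H)) :
    ∃ (v : H) (β : F), IsSelfAdjoint v ∧ v * s = -(s * v) ∧ v * v = β • 1 ∧ β ≠ 0 := by
  obtain ⟨v, hv, hvs, hv0⟩ := exists_anticomm_ne_zero hs h2 hrank
  by_contra! hiso
  have hsq : ∀ w, IsSelfAdjoint w → w * s = -(s * w) → w * w = 0 := by
    intro w hw hws
    obtain ⟨β, hβ⟩ := exists_mul_self_eq_smul_one_of_anticomm hs hss hα h2 hw hws
    rw [hβ, hiso w β hw hws hβ, zero_smul]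
  -- otherwise `v * g * v = 0` for every `g`, contradicting simplicity
  obtain ⟨g, hg⟩ := IsSimpleRing.exists_mul_mul_ne_zero hv0
  obtain ⟨y, c, hy, rfl⟩ := exists_isSelfAdjoint_add_smul hs h2 g
  obtain ⟨k, w, hw, hws, rfl⟩ := exists_eq_smul_one_add_anticomm hs h2 hy
  have hvv := hsq v hv hvs
  have hvw : v * w = -(w * v) := by
    have h := hsq (v + w) (hv.add hw) (by rw [add_mul, mul_add, hvs, hws, neg_add])
    rw [add_mul, mul_add, mul_add, hvv, hsq w hw hws, zero_add, add_zero] at h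
    exact eq_neg_of_add_eq_zero_left h
  apply hg
  simp only [mul_add, add_mul, mul_smul_comm, smul_mul_assoc, mul_one, hvv, hvw, hvs, neg_mul,
    mul_assoc, smul_zero, mul_zero, neg_zero, add_zero]

theorem exists_quaternionBasis [IsSimpleRing H] [FiniteDimensional F H] {α : F}
    (hs : skewAdjoint.submodule F H = F ∙ s) (hss : s * s = α • 1) (hα : α ≠ 0)
    (h2 : (2 : F) ≠ 0) (hrank : 1 < finrank F (selfAdjoint.submodule F H)) :
    ∃ (β : F) (q : QuaternionAlgebra.Basis H α 0 β), β ≠ 0 ∧ q.i = s ∧ IsSelfAdjoint q.j := by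
  obtain ⟨v, β, hv, hvs, hvv, hβ⟩ := exists_anticomm_mul_self_eq_smul_one hs hss hα h2 hrank
  let q : QuaternionAlgebra.Basis H α 0 β :=
    { i := s, j := v, k := s * v
      i_mul_i := by rw [hss, zero_smul, add_zero]
      j_mul_j := hvv
      i_mul_j := rfl
      j_mul_i := by rw [hvs, zero_smul, zero_sub] }
  exact ⟨β, q, hβ, rfl, hv⟩

end SkewGenerator

end StarAlgebra

/-- if `H` is a quaternion algebra over a field `F` of characteristic ≠ 2 with
orthogonal involution `‡` and fixed subspace `H^+`, then every unit `u ∈ H^×` can be written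
as `u = 1 + x·y` with `x, y ∈ H^+`. -/
theorem stmt_2 (F H : Type*) [Field F] [Ring H] [Algebra F H]
    (hchar : (2 : F) ≠ 0)
    [Algebra.IsCentral F H] [IsSimpleRing H] (hdim : Module.finrank F H = 4)
    (dag : H → H) (hdag : IsOrthogonalInvolution F dag) :
    ∀ u : Hˣ, ∃ x y : H, dag x = x ∧ dag y = y ∧ (u : H) = 1 + x * y := by
  obtain ⟨hadd, hsmul, hmul, hinv, hrank⟩ := hdag
  let : StarRing F := starRingOfComm
  have : TrivialStar F := ⟨fun _ => rfl⟩
  let : StarRing H := { star := dag, star_involutive := hinv, star_mul := hmul, star_add := hadd }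
  have : StarModule F H := ⟨hsmul⟩
  have : FiniteDimensional F H := .of_finrank_pos (by omega)
  rw [show {x : H | dag x = x} = (selfAdjoint.submodule F H : Set H) from rfl,
    Submodule.span_eq] at hrank
  have hsum := finrank_selfAdjoint_add_finrank_skewAdjoint (F := F) (H := H) hchar
  obtain ⟨s, hs0, hs⟩ :=
    Submodule.exists_eq_span_singleton_of_finrank_eq_one (p := skewAdjoint.submodule F H)
      (by omega)
  obtain ⟨α, hss⟩ := exists_mul_self_eq_smul_one hs hchar
  have hα : α ≠ 0 := by
    rintro rfl
    exact mul_self_ne_zero_of_skewAdjoint_eq_span hs hchar hs0 (by rw [hss, zero_smul])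
  obtain ⟨β, q, hβ, rfl, hj⟩ := exists_quaternionBasis hs hss hα hchar (by omega)
  intro u
  obtain ⟨t, ht⟩ := q.lift_surjective hchar hα hβ hdim (u - 1)
  obtain ⟨x, y, hx, hy, hxy⟩ :=
    q.exists_isSelfAdjoint_mul_eq_lift (star_eq_neg_of_skewAdjoint_eq_span hs) hj hchar hα hβ t
  exact ⟨x, y, hx, hy, by rw [hxy, ht, add_sub_cancel]⟩
end

section
/- Let H be a quaternion algebra over ℚ with orthogonal involution ‡, let 𝒪 be a maximal ‡-order of H, and let Γ be a subgroup of SL^‡(2,H) that is commensurable with SL^‡(2,𝒪) (i.e. Γ ∩ SL^‡(2,𝒪) has finite index in both Γ and SL^‡(2,𝒪)). Then the subring ℤ[Γ] of Mat(2,H) generated by Γ is finitely generated as a ℤ-module, i.e. it is an order of the central simple algebra Mat(2,H). -/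
/-- `𝒪` is an order of the rational quaternion algebra `H`: a subring (hence containing `ℤ`)
finitely generated as a `ℤ`-module and spanning `H` over `ℚ`. -/
def IsZOrder {H : Type*} [Ring H] [Algebra ℚ H] (𝒪 : Subring H) : Prop :=
  (∃ s : Finset H, (s : Set H) ⊆ 𝒪 ∧ ∀ x ∈ 𝒪, x ∈ Submodule.span ℤ (s : Set H)) ∧
  Submodule.span ℚ (𝒪 : Set H) = ⊤

/-- `𝒪` is a maximal `‡`-order. -/
def IsMaximalDagOrder {H : Type*} [Ring H] [Algebra ℚ H] (dag : H → H) (𝒪 : Subring H) :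
    Prop :=
  IsZOrder 𝒪 ∧ dag '' (𝒪 : Set H) = (𝒪 : Set H) ∧
  ∀ 𝒪' : Subring H, IsZOrder 𝒪' → dag '' (𝒪' : Set H) = (𝒪' : Set H) → 𝒪 ≤ 𝒪' → 𝒪' = 𝒪

/-- `S` has finite index in `A`: finitely many left translates of `S` cover `A`. -/
def FinIdxIn {M : Type*} [Monoid M] (S A : Set M) : Prop :=
  ∃ T : Finset M, ∀ a ∈ A, ∃ t ∈ T, ∃ s ∈ S, a = t * s

/-- `A` and `B` are commensurable: `A ∩ B` has finite index in both `A` and `B`. -/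
def SetCommensurable {M : Type*} [Monoid M] (A B : Set M) : Prop :=
  FinIdxIn (A ∩ B) A ∧ FinIdxIn (A ∩ B) B

/-! Commensurability yields a finite `T` with `Γ ⊆ T · Mat₂(𝒪)`, so `Γ` lies in the finitely
generated `ℤ`-module `span T · Mat₂(𝒪)`. As `Γ` is a monoid, `ℤ[Γ]` is its `ℤ`-span, which is
therefore finitely generated because `ℤ` is Noetherian. -/

namespace Submodule

theorem FG.matrix {R M m n : Type*} [Semiring R] [AddCommMonoid M] [Module R M]
    [Finite m] [Finite n] {S : Submodule R M} (hS : S.FG) :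
    (S.matrix : Submodule R (Matrix m n M)).FG := by
  convert (fg_pi fun _ : m => fg_pi fun _ : n => hS).map (Matrix.ofLinearEquiv R).toLinearMap
  ext M
  simp only [mem_map, mem_pi]
  constructor
  · exact fun hM => ⟨M, fun i _ j _ => hM i j, rfl⟩
  · rintro ⟨M, hM, rfl⟩ i j
    exact hM i trivial j trivial

end Submodule

theorem FinIdxIn.fg_span {R A : Type*} [CommRing R] [IsNoetherianRing R] [Ring A]
    [Algebra R A] {B C : Set A} (h : FinIdxIn B C) (hB : (Submodule.span R B).FG) :
    (Submodule.span R C).FG := by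
  obtain ⟨T, hT⟩ := h
  refine ((Submodule.fg_span T.finite_toSet).mul hB).of_le (Submodule.span_le.2 fun a ha => ?_)
  obtain ⟨t, ht, b, hb, rfl⟩ := hT a ha
  exact Submodule.mul_mem_mul (Submodule.subset_span ht) (Submodule.subset_span hb)

theorem Subring.closure_toAddSubgroup_fg_of_span_fg {A : Type*} [Ring A] (S : Submonoid A)
    (h : (Submodule.span ℤ (S : Set A)).FG) : (Subring.closure (S : Set A)).toAddSubgroup.FG := by
  have hclosure : (Subring.closure (S : Set A)).toAddSubgroup = AddSubgroup.closure S :=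
    AddSubgroup.ext fun _ => by rw [Subring.mem_toAddSubgroup, Subring.mem_closure_iff,
      Submonoid.closure_eq]
  rw [hclosure, ← AddSubgroup.toIntSubmodule_toAddSubgroup (AddSubgroup.closure _),
    AddSubgroup.toIntSubmodule_closure, ← Submodule.fg_iff_addSubgroup_fg]
  exact h

theorem stmt_10_general (H : Type*) [Ring H] [Algebra ℚ H]
    (dag : H → H)
    (𝒪 : Subring H) (h𝒪 : IsMaximalDagOrder dag 𝒪)
    (Γ : Set (Matrix (Fin 2) (Fin 2) H))
    (hΓone : (1 : Matrix (Fin 2) (Fin 2) H) ∈ Γ)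
    (hΓmul : ∀ a ∈ Γ, ∀ b ∈ Γ, a * b ∈ Γ)
    (hcomm : SetCommensurable Γ
      (SLdag dag ∩ {M : Matrix (Fin 2) (Fin 2) H | ∀ i j, M i j ∈ 𝒪})) :
    (Subring.closure Γ).toAddSubgroup.FG := by
  obtain ⟨⟨⟨s, -, h𝒪s⟩, -⟩, -, -⟩ := h𝒪
  let Γmon : Submonoid (Matrix (Fin 2) (Fin 2) H) :=
    { carrier := Γ, mul_mem' := fun ha hb => hΓmul _ ha _ hb, one_mem' := hΓone }
  have hΓ𝒪 : (Submodule.span ℤ (Γ ∩ (SLdag dag ∩ {M | ∀ i j, M i j ∈ 𝒪}))).FG :=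
    (Submodule.fg_span s.finite_toSet).matrix.of_le
      (Submodule.span_le.2 fun M hM i j => h𝒪s _ (hM.2.2 i j))
  exact Subring.closure_toAddSubgroup_fg_of_span_fg Γmon (hcomm.1.fg_span hΓ𝒪)

/-- if `Γ` is an arithmetic subgroup of `SL^‡(2,H)` (a subgroup commensurable
with `SL^‡(2,𝒪)` for a maximal `‡`-order `𝒪` of the rational quaternion algebra `H`), then
the subring `ℤ[Γ]` of `Mat(2,H)` generated by `Γ` is finitely generated as a `ℤ`-module,
i.e. an order of the central simple algebra `Mat(2,H)`. -/
theorem stmt_10 (H : Type*) [Ring H] [Algebra ℚ H]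
    [Algebra.IsCentral ℚ H] [IsSimpleRing H] (hdim : Module.finrank ℚ H = 4)
    (dag : H → H) (hdag : IsOrthogonalInvolution ℚ dag)
    (𝒪 : Subring H) (h𝒪 : IsMaximalDagOrder dag 𝒪)
    (Γ : Set (Matrix (Fin 2) (Fin 2) H))
    (hΓsub : Γ ⊆ SLdag dag) (hΓone : (1 : Matrix (Fin 2) (Fin 2) H) ∈ Γ)
    (hΓmul : ∀ a ∈ Γ, ∀ b ∈ Γ, a * b ∈ Γ)
    (hΓinv : ∀ a ∈ Γ, ∃ b ∈ Γ, a * b = 1 ∧ b * a = 1)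
    (hcomm : SetCommensurable Γ
      (SLdag dag ∩ {M : Matrix (Fin 2) (Fin 2) H | ∀ i j, M i j ∈ 𝒪})) :
    (Subring.closure Γ).toAddSubgroup.FG :=
  stmt_10_general H dag 𝒪 h𝒪 Γ hΓone hΓmul hcomm
end

section
/- Let H = (−1,−23/ℚ) be the quaternion algebra over ℚ with i² = −1, j² = −23, ij = −ji. Let 𝒪₁ = ℤ ⊕ ℤi ⊕ ℤ(1+j)/2 ⊕ ℤ(i+ij)/2 and 𝒪₂ = ℤ ⊕ 3ℤi ⊕ ℤ(1+j)/2 ⊕ ℤ(11i+ij)/6, both subrings of H. Then the unit groups are 𝒪₁^× = {1, −1, i, −i} and 𝒪₂^× = {1, −1}; consequently 𝒪₁ and 𝒪₂ are not isomorphic as rings. -/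
/-!
The reduced norm `x ↦ x * star x = re² + imI² + 23 imJ² + 23 imK²` is multiplicative and takes
non-negative integer values on both orders, so their units are exactly the elements of norm `1`.
In the given `ℤ`-coordinates the norm is `(a² + ac + 6c²) + (b² + bd + 6d²)` on `𝒪₁` and
`(a² + ac + 6c²) + (9b² + 11bd + 4d²)` on `𝒪₂`, sums of binary forms of discriminant `-23`;
completing squares (`4(a² + ac + 6c²) = (2a + c)² + 23c²`,
`36(9b² + 11bd + 4d²) = (18b + 11d)² + 23d²`) leaves only the solutions giving `±1, ±i`,
resp. `±1`. A ring isomorphism `𝒪₁ ≃+* 𝒪₂` would send the unit `i`, whose square is `-1 ≠ 1`,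
to a unit of `𝒪₂`, all of which square to `1`.
-/

open Quaternion

namespace QuaternionAlgebra

variable {R : Type*} [CommRing R] {c₁ c₂ c₃ : R}

def reducedNorm : ℍ[R,c₁,c₂,c₃] →* R where
  toFun a := (a * star a).re
  map_one' := by simp
  map_mul' x y := by
    have h : x * y * star (x * y) = ((x * star x).re * (y * star y).re : R) := by
      rw [star_mul, mul_assoc, ← mul_assoc y, y.mul_star_eq_coe, coe_commutes, ← mul_assoc,
        x.mul_star_eq_coe, re_coe, re_coe, coe_mul]
    simp only [h, re_coe]

theorem reducedNorm_def (a : ℍ[R,c₁,0,c₃]) :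
    reducedNorm a = a.re ^ 2 - c₁ * a.imI ^ 2 - c₃ * a.imJ ^ 2 + c₁ * c₃ * a.imK ^ 2 := by
  simp only [reducedNorm, MonoidHom.coe_mk, OneHom.coe_mk, re_mul, re_star, imI_star, imJ_star,
    imK_star]
  ring

theorem reducedNorm_nonneg [LinearOrder R] [IsStrictOrderedRing R] (h₁ : c₁ ≤ 0) (h₃ : c₃ ≤ 0)
    (a : ℍ[R,c₁,0,c₃]) : 0 ≤ reducedNorm a := by
  rw [reducedNorm_def]
  nlinarith [mul_nonneg (neg_nonneg.2 h₁) (sq_nonneg a.imI),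
    mul_nonneg (neg_nonneg.2 h₃) (sq_nonneg a.imJ),
    mul_nonneg (mul_nonneg_of_nonpos_of_nonpos h₁ h₃) (sq_nonneg a.imK), sq_nonneg a.re]

end QuaternionAlgebra

theorem Submodule.mem_span_four {R M : Type*} [Semiring R] [AddCommMonoid M] [Module R M]
    {g₁ g₂ g₃ g₄ x : M} :
    x ∈ span R {g₁, g₂, g₃, g₄} ↔ ∃ a b c d : R, a • g₁ + b • g₂ + c • g₃ + d • g₄ = x := by
  simp only [mem_span_insert, mem_span_singleton]
  constructor
  · rintro ⟨a, _, ⟨b, _, ⟨c, _, ⟨d, rfl⟩, rfl⟩, rfl⟩, rfl⟩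
    exact ⟨a, b, c, d, by simp only [add_assoc]⟩
  · rintro ⟨a, b, c, d, rfl⟩
    exact ⟨a, _, ⟨b, _, ⟨c, _, ⟨d, rfl⟩, rfl⟩, rfl⟩, by simp only [add_assoc]⟩

theorem map_units_coe_eq_one_of_intCast {M R S : Type*} [Monoid M] [SetLike S M]
    [SubmonoidClass S M] [Ring R] [LinearOrder R] [IsStrictOrderedRing R] (O : S) (N : M →* R)
    (hN : ∀ x ∈ O, ∃ n : ℤ, N x = n) (h0 : ∀ x ∈ O, 0 ≤ N x) (u : Oˣ) : N ((u : O) : M) = 1 := by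
  obtain ⟨m, hm⟩ := hN _ (u : O).2
  obtain ⟨n, hn⟩ := hN _ (↑u⁻¹ : O).2
  have hmn : m * n = 1 := by
    exact_mod_cast (show ((m * n : ℤ) : R) = 1 by
      rw [Int.cast_mul, ← hm, ← hn, ← map_mul, ← MulMemClass.coe_mul, Units.mul_inv,
        OneMemClass.coe_one, map_one])
  have hm0 : 0 ≤ m := by exact_mod_cast hm ▸ h0 _ (u : O).2
  rw [hm, Int.eq_one_of_mul_eq_one_right hm0 hmn, Int.cast_one]

theorem exists_units_coe_eq_of_mul_eq_one {A S : Type*} [Monoid A] [SetLike S A]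
    [SubmonoidClass S A] (O : S) {x y : A} (hx : x ∈ O) (hy : y ∈ O) (hxy : x * y = 1)
    (hyx : y * x = 1) :
    ∃ u : Oˣ, ((u : O) : A) = x :=
  ⟨⟨⟨x, hx⟩, ⟨y, hy⟩, Subtype.ext hxy, Subtype.ext hyx⟩, rfl⟩

theorem MulEquiv.isEmpty_of_sq_ne_one {M N : Type*} [Monoid M] [Monoid N] (u : Mˣ)
    (hu : u ^ 2 ≠ 1) (hN : ∀ v : Nˣ, v ^ 2 = 1) : IsEmpty (M ≃* N) :=
  ⟨fun f => hu <| (Units.mapEquiv f).injective <| by rw [map_pow, hN, map_one]⟩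

theorem eq_zero_of_sq_add_mul_add_six_sq_le_one {a c : ℤ} (h : a ^ 2 + a * c + 6 * c ^ 2 ≤ 1) :
    c = 0 := by
  have : c ^ 2 < 1 := by nlinarith [sq_nonneg (2 * a + c)]
  nlinarith [sq_nonneg c]

theorem sq_add_mul_add_six_sq_nonneg (a c : ℤ) : 0 ≤ a ^ 2 + a * c + 6 * c ^ 2 := by
  nlinarith [sq_nonneg (2 * a + c), sq_nonneg c]

theorem eq_zero_of_nine_sq_add_mul_add_four_sq_le_one {b d : ℤ}
    (h : 9 * b ^ 2 + 11 * b * d + 4 * d ^ 2 ≤ 1) : b = 0 ∧ d = 0 := by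
  have hd : d ^ 2 ≤ 1 := by nlinarith [sq_nonneg (18 * b + 11 * d)]
  have hd' : -1 ≤ d ∧ d ≤ 1 := by constructor <;> nlinarith
  have hb : -1 ≤ b ∧ b ≤ 1 := by constructor <;> nlinarith [sq_nonneg (18 * b + 11 * d)]
  obtain ⟨hd₁, hd₂⟩ := hd'
  obtain ⟨hb₁, hb₂⟩ := hb
  interval_cases b <;> interval_cases d <;> simp_all

theorem lattice₁_form_eq_one {a b c d : ℤ}
    (h : a ^ 2 + a * c + 6 * c ^ 2 + (b ^ 2 + b * d + 6 * d ^ 2) = 1) :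
    c = 0 ∧ d = 0 ∧ (a = 1 ∧ b = 0 ∨ a = -1 ∧ b = 0 ∨ a = 0 ∧ b = 1 ∨ a = 0 ∧ b = -1) := by
  have hac := sq_add_mul_add_six_sq_nonneg a c
  have hbd := sq_add_mul_add_six_sq_nonneg b d
  obtain rfl := eq_zero_of_sq_add_mul_add_six_sq_le_one (a := a) (c := c) (by linarith)
  obtain rfl := eq_zero_of_sq_add_mul_add_six_sq_le_one (a := b) (c := d) (by linarith)
  have ha : -1 ≤ a ∧ a ≤ 1 := by constructor <;> nlinarith
  have hb : -1 ≤ b ∧ b ≤ 1 := by constructor <;> nlinarith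
  obtain ⟨ha₁, ha₂⟩ := ha
  obtain ⟨hb₁, hb₂⟩ := hb
  interval_cases a <;> interval_cases b <;> simp_all

theorem lattice₂_form_eq_one {a b c d : ℤ}
    (h : a ^ 2 + a * c + 6 * c ^ 2 + (9 * b ^ 2 + 11 * b * d + 4 * d ^ 2) = 1) :
    b = 0 ∧ c = 0 ∧ d = 0 ∧ (a = 1 ∨ a = -1) := by
  have hac := sq_add_mul_add_six_sq_nonneg a c
  obtain ⟨rfl, rfl⟩ :=
    eq_zero_of_nine_sq_add_mul_add_four_sq_le_one (b := b) (d := d) (by linarith)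
  obtain rfl := eq_zero_of_sq_add_mul_add_six_sq_le_one (a := a) (c := c) (by linarith)
  have : (a - 1) * (a + 1) = 0 := by linarith
  simpa [sub_eq_zero, add_eq_zero_iff_eq_neg] using this

open QuaternionAlgebra

local notation "𝔹" => ℍ[ℚ, -1, -23]

def lattice₁ : Submodule ℤ 𝔹 :=
  Submodule.span ℤ {1, ⟨0, 1, 0, 0⟩, ⟨1/2, 0, 1/2, 0⟩, ⟨0, 1/2, 0, 1/2⟩}

def lattice₂ : Submodule ℤ 𝔹 :=
  Submodule.span ℤ {1, ⟨0, 3, 0, 0⟩, ⟨1/2, 0, 1/2, 0⟩, ⟨0, 11/6, 0, 1/6⟩}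

theorem exists_eq_mk_of_mem_lattice₁ {x : 𝔹} (hx : x ∈ lattice₁) :
    ∃ a b c d : ℤ, x = ⟨a + c / 2, b + d / 2, c / 2, d / 2⟩ := by
  obtain ⟨a, b, c, d, rfl⟩ := Submodule.mem_span_four.mp hx
  exact ⟨a, b, c, d, by ext <;> simp <;> ring⟩

theorem exists_eq_mk_of_mem_lattice₂ {x : 𝔹} (hx : x ∈ lattice₂) :
    ∃ a b c d : ℤ, x = ⟨a + c / 2, 3 * b + 11 * d / 6, c / 2, d / 6⟩ := by
  obtain ⟨a, b, c, d, rfl⟩ := Submodule.mem_span_four.mp hx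
  exact ⟨a, b, c, d, by ext <;> simp <;> ring⟩

theorem reducedNorm_mk_lattice₁ (a b c d : ℤ) :
    reducedNorm (⟨a + c / 2, b + d / 2, c / 2, d / 2⟩ : 𝔹) =
      ((a ^ 2 + a * c + 6 * c ^ 2 + (b ^ 2 + b * d + 6 * d ^ 2) : ℤ) : ℚ) := by
  rw [reducedNorm_def]
  push_cast
  ring

theorem reducedNorm_mk_lattice₂ (a b c d : ℤ) :
    reducedNorm (⟨a + c / 2, 3 * b + 11 * d / 6, c / 2, d / 6⟩ : 𝔹) =
      ((a ^ 2 + a * c + 6 * c ^ 2 + (9 * b ^ 2 + 11 * b * d + 4 * d ^ 2) : ℤ) : ℚ) := by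
  rw [reducedNorm_def]
  push_cast
  ring

theorem exists_reducedNorm_eq_intCast_of_mem_lattice₁ {x : 𝔹} (hx : x ∈ lattice₁) :
    ∃ n : ℤ, reducedNorm x = n := by
  obtain ⟨a, b, c, d, rfl⟩ := exists_eq_mk_of_mem_lattice₁ hx
  exact ⟨_, reducedNorm_mk_lattice₁ a b c d⟩

theorem range_units_coe_of_eq_lattice₁ (O : Subring 𝔹) (hO : (O : Set 𝔹) = lattice₁) :
    {x : 𝔹 | ∃ u : Oˣ, ((u : O) : 𝔹) = x} = {1, -1, ⟨0, 1, 0, 0⟩, ⟨0, -1, 0, 0⟩} := by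
  have hmem : ∀ x ∈ O, x ∈ lattice₁ := fun x hx => by rwa [← SetLike.mem_coe, ← hO]
  ext x
  constructor
  · rintro ⟨u, rfl⟩
    have hu := map_units_coe_eq_one_of_intCast O reducedNorm
      (fun x hx => exists_reducedNorm_eq_intCast_of_mem_lattice₁ (hmem x hx))
      (fun x _ => reducedNorm_nonneg (by norm_num) (by norm_num) x) u
    obtain ⟨a, b, c, d, hx⟩ := exists_eq_mk_of_mem_lattice₁ (hmem _ (u : O).2)
    rw [hx] at hu ⊢
    rw [reducedNorm_mk_lattice₁] at hu
    obtain ⟨rfl, rfl, hab⟩ := lattice₁_form_eq_one (by exact_mod_cast hu)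
    rcases hab with ⟨rfl, rfl⟩ | ⟨rfl, rfl⟩ | ⟨rfl, rfl⟩ | ⟨rfl, rfl⟩ <;>
      simp [QuaternionAlgebra.ext_iff]
  · have hi : (⟨0, 1, 0, 0⟩ : 𝔹) ∈ O := by
      rw [← SetLike.mem_coe, hO]
      exact Submodule.subset_span (by simp)
    have hi' : (⟨0, -1, 0, 0⟩ : 𝔹) ∈ O := by simpa using O.neg_mem hi
    rintro (rfl | rfl | rfl | rfl)
    · exact exists_units_coe_eq_of_mul_eq_one O O.one_mem O.one_mem (one_mul 1) (one_mul 1)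
    · exact exists_units_coe_eq_of_mul_eq_one O (O.neg_mem O.one_mem) (O.neg_mem O.one_mem)
        (by simp) (by simp)
    · exact exists_units_coe_eq_of_mul_eq_one O hi hi' (by ext <;> simp) (by ext <;> simp)
    · exact exists_units_coe_eq_of_mul_eq_one O hi' hi (by ext <;> simp) (by ext <;> simp)

theorem exists_reducedNorm_eq_intCast_of_mem_lattice₂ {x : 𝔹} (hx : x ∈ lattice₂) :
    ∃ n : ℤ, reducedNorm x = n := by
  obtain ⟨a, b, c, d, rfl⟩ := exists_eq_mk_of_mem_lattice₂ hx
  exact ⟨_, reducedNorm_mk_lattice₂ a b c d⟩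

theorem range_units_coe_of_eq_lattice₂ (O : Subring 𝔹) (hO : (O : Set 𝔹) = lattice₂) :
    {x : 𝔹 | ∃ u : Oˣ, ((u : O) : 𝔹) = x} = {1, -1} := by
  have hmem : ∀ x ∈ O, x ∈ lattice₂ := fun x hx => by rwa [← SetLike.mem_coe, ← hO]
  ext x
  constructor
  · rintro ⟨u, rfl⟩
    have hu := map_units_coe_eq_one_of_intCast O reducedNorm
      (fun x hx => exists_reducedNorm_eq_intCast_of_mem_lattice₂ (hmem x hx))
      (fun x _ => reducedNorm_nonneg (by norm_num) (by norm_num) x) u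
    obtain ⟨a, b, c, d, hx⟩ := exists_eq_mk_of_mem_lattice₂ (hmem _ (u : O).2)
    rw [hx] at hu ⊢
    rw [reducedNorm_mk_lattice₂] at hu
    obtain ⟨rfl, rfl, rfl, ha⟩ := lattice₂_form_eq_one (by exact_mod_cast hu)
    rcases ha with rfl | rfl <;> simp [QuaternionAlgebra.ext_iff]
  · rintro (rfl | rfl)
    · exact exists_units_coe_eq_of_mul_eq_one O O.one_mem O.one_mem (one_mul 1) (one_mul 1)
    · exact exists_units_coe_eq_of_mul_eq_one O (O.neg_mem O.one_mem) (O.neg_mem O.one_mem)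
        (by simp) (by simp)

/-- in `H = (−1,−23/ℚ)`, the orders
`𝒪₁ = ℤ ⊕ ℤi ⊕ ℤ(1+j)/2 ⊕ ℤ(i+ij)/2` and `𝒪₂ = ℤ ⊕ 3ℤi ⊕ ℤ(1+j)/2 ⊕ ℤ(11i+ij)/6` have unit
groups `𝒪₁^× = {1, −1, i, −i}` and `𝒪₂^× = {1, −1}`; consequently `𝒪₁` and `𝒪₂` are not
isomorphic as rings. -/
theorem stmt_13 (O₁ O₂ : Subring ℍ[ℚ, -1, -23])
    (hO₁ : (O₁ : Set ℍ[ℚ, -1, -23]) =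
      (Submodule.span ℤ {(1 : ℍ[ℚ, -1, -23]), ⟨0, 1, 0, 0⟩,
        ⟨1/2, 0, 1/2, 0⟩, ⟨0, 1/2, 0, 1/2⟩} : Submodule ℤ ℍ[ℚ, -1, -23]))
    (hO₂ : (O₂ : Set ℍ[ℚ, -1, -23]) =
      (Submodule.span ℤ {(1 : ℍ[ℚ, -1, -23]), ⟨0, 3, 0, 0⟩,
        ⟨1/2, 0, 1/2, 0⟩, ⟨0, 11/6, 0, 1/6⟩} : Submodule ℤ ℍ[ℚ, -1, -23])) :
    {x : ℍ[ℚ, -1, -23] | ∃ u : O₁ˣ, ((u : O₁) : ℍ[ℚ, -1, -23]) = x}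
        = {1, -1, ⟨0, 1, 0, 0⟩, ⟨0, -1, 0, 0⟩} ∧
    {x : ℍ[ℚ, -1, -23] | ∃ u : O₂ˣ, ((u : O₂) : ℍ[ℚ, -1, -23]) = x} = {1, -1} ∧
    ¬ Nonempty (O₁ ≃+* O₂) := by
  have units₁ := range_units_coe_of_eq_lattice₁ O₁ hO₁
  have units₂ := range_units_coe_of_eq_lattice₂ O₂ hO₂
  refine ⟨units₁, units₂, fun ⟨f⟩ => ?_⟩
  obtain ⟨i, hi⟩ : (⟨0, 1, 0, 0⟩ : 𝔹) ∈ {x : 𝔹 | ∃ u : O₁ˣ, ((u : O₁) : 𝔹) = x} := by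
    simp [units₁]
  have hi_sq : i ^ 2 ≠ 1 := fun h => by
    have := congrArg (fun v : O₁ˣ => ((v : O₁) : 𝔹).re) h
    norm_num [sq, hi] at this
  have units₂_sq : ∀ v : O₂ˣ, v ^ 2 = 1 := fun v => by
    have hv : ((v : O₂) : 𝔹) ∈ ({1, -1} : Set 𝔹) := units₂ ▸ ⟨v, rfl⟩
    simp only [Set.mem_insert_iff, Set.mem_singleton_iff] at hv
    refine Units.ext (Subtype.ext ?_)
    rcases hv with hv | hv <;> simp [hv]
  exact (MulEquiv.isEmpty_of_sq_ne_one i hi_sq units₂_sq).false f.toMulEquiv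
end
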